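/- arXiv:2104.13801 — 3 statements merged into one kernel-verified Lean document; each statement's English description precedes it below -/
import Mathlib

section
/- Let p_{0,1}(x) = 1/(π(1+x²)) and p_{1,1}(x) = 1/(π(1+(x−1)²)), and for θ ∈ (0,1) let m_θ = (1−θ)·p_{0,1} + θ·p_{1,1}. Then for all θ1, θ2 ∈ (0,1), the Kullback–Leibler divergence admits the closed form: ∫_ℝ m_{θ1}(x)·log(m_{θ1}(x)/m_{θ2}(x)) dx = θ1·log( ((2·√(1+θ1−θ1²)+θ1+2)·(2·√(1+θ2−θ2²)−θ2+3)) / ((2·√(1+θ1−θ1²)−θ1+3)·(2·√(1+θ2−θ2²)+θ2+2)) ) + log( (2·√(1+θ1−θ1²)−θ1+3) / (2·√(1+θ2−θ2²)−θ2+3) ). -/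
/-!
With `s = √(1 + θ - θ²)` one has `m_θ(x) = ((x - (1 - θ))² + s²) / (π (1 + x²) (1 + (x - 1)²))`,
so the common denominator cancels in `log (m_θ₁ / m_θ₂)` and the divergence is a combination of
integrals of `log ((x - a)² + b²) = log |x - (a - i b)|²` against the Cauchy densities `p_{x₀,1}`.
Such an integral is the Poisson integral of a harmonic function, equal to its value
`log ((a - x₀)² + (1 + b)²)` at `x₀ + i`. We prove this by differentiating in `b`: the derivative
is a rational integral computed by partial fractions, and the difference of the two sides
tends to `0` as `b → ∞` by dominated convergence.
-/

open MeasureTheory Real Set Filter Topology ProbabilityTheory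

lemma cauchyPDFReal_zero_one (x : ℝ) : cauchyPDFReal 0 1 x = π⁻¹ * (x ^ 2 + 1)⁻¹ := by
  simp [cauchyPDFReal_def]

lemma cauchyPDFReal_eq_cauchyPDFReal_zero (x₀ : ℝ) (γ : NNReal) (x : ℝ) :
    cauchyPDFReal x₀ γ x = cauchyPDFReal 0 γ (x - x₀) := by
  simp [cauchyPDFReal_def]

lemma integrable_inv_sq_add_one_mul_log_sq_add_one :
    Integrable fun x : ℝ => (x ^ 2 + 1)⁻¹ * log (x ^ 2 + 1) := by
  refine ((integrable_rpow_neg_one_add_norm_sq (E := ℝ) (μ := volume) (r := 3 / 2)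
    (by norm_num)).const_mul 4).mono' (by fun_prop) (ae_of_all _ fun x => ?_)
  have hx : 0 < x ^ 2 + 1 := by positivity
  rw [norm_of_nonneg (mul_nonneg (inv_nonneg.2 hx.le) (log_nonneg (by nlinarith))),
    norm_eq_abs, sq_abs, add_comm 1]
  calc (x ^ 2 + 1)⁻¹ * log (x ^ 2 + 1)
      ≤ (x ^ 2 + 1)⁻¹ * ((x ^ 2 + 1) ^ (1 / 4 : ℝ) / (1 / 4)) := by
        gcongr; exact log_le_rpow_div hx.le (by norm_num)
    _ = 4 * (x ^ 2 + 1) ^ (-(3 / 2 : ℝ) / 2) := by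
        rw [show -(3 / 2 : ℝ) / 2 = -1 + 1 / 4 by norm_num, rpow_add hx, rpow_neg_one]
        ring

lemma exists_abs_log_sq_add_sq_le (a : ℝ) {b : ℝ} (hb : b ≠ 0) :
    ∃ K, ∀ x, |log ((x - a) ^ 2 + b ^ 2)| ≤ log (x ^ 2 + 1) + K := by
  refine ⟨log (2 * a ^ 2 + b ^ 2 + 2) + |log (b ^ 2)|, fun x => ?_⟩
  have hlow : log (b ^ 2) ≤ log ((x - a) ^ 2 + b ^ 2) :=
    log_le_log (by positivity) (by nlinarith [sq_nonneg (x - a)])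
  have hup : log ((x - a) ^ 2 + b ^ 2) ≤ log (2 * a ^ 2 + b ^ 2 + 2) + log (x ^ 2 + 1) := by
    rw [← log_mul (by positivity) (by positivity)]
    exact log_le_log (by positivity) (by nlinarith [sq_nonneg (x + a), sq_nonneg x, sq_nonneg a])
  have h₁ : 0 ≤ log (x ^ 2 + 1) := log_nonneg (by nlinarith [sq_nonneg x])
  have h₂ : 0 ≤ log (2 * a ^ 2 + b ^ 2 + 2) := log_nonneg (by nlinarith [sq_nonneg a])
  rw [abs_le]
  constructor <;> linarith [neg_abs_le (log (b ^ 2)), abs_nonneg (log (b ^ 2))]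

lemma integrable_cauchyPDFReal_mul_log_sq_add_sq (x₀ a : ℝ) {b : ℝ} (hb : b ≠ 0) :
    Integrable fun x => cauchyPDFReal x₀ 1 x * log ((x - a) ^ 2 + b ^ 2) := by
  have h₀ : ∀ a, Integrable fun x => cauchyPDFReal 0 1 x * log ((x - a) ^ 2 + b ^ 2) := by
    intro a
    obtain ⟨K, hK⟩ := exists_abs_log_sq_add_sq_le a hb
    refine ((integrable_inv_sq_add_one_mul_log_sq_add_one.add
      (integrable_inv_one_add_sq.const_mul K)).const_mul π⁻¹).mono'
      (by fun_prop) (ae_of_all _ fun x => ?_)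
    rw [norm_mul, norm_of_nonneg (cauchyPDF_pos 0 one_ne_zero x).le, norm_eq_abs,
      cauchyPDFReal_zero_one, Pi.add_apply, add_comm 1 (x ^ 2), mul_assoc]
    gcongr
    calc (x ^ 2 + 1)⁻¹ * |log ((x - a) ^ 2 + b ^ 2)|
        ≤ (x ^ 2 + 1)⁻¹ * (log (x ^ 2 + 1) + K) := by gcongr; exact hK x
      _ = _ := by ring
  refine ((h₀ (a - x₀)).comp_sub_right x₀).congr (ae_of_all _ fun x => ?_)
  simp only [cauchyPDFReal_eq_cauchyPDFReal_zero x₀ 1 x, sub_sub_sub_cancel_right]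

lemma tendsto_sq_add_div_sq_add (a u v : ℝ) :
    Tendsto (fun x : ℝ => (x ^ 2 + u) / ((x - a) ^ 2 + v)) atTop (𝓝 1) := by
  have hnum : Tendsto (fun y : ℝ => 1 + u * y ^ 2) (𝓝 0) (𝓝 1) := by
    simpa using (show Continuous fun y : ℝ => 1 + u * y ^ 2 by fun_prop).tendsto 0
  have hden : Tendsto (fun y : ℝ => (1 - a * y) ^ 2 + v * y ^ 2) (𝓝 0) (𝓝 1) := by
    simpa using (show Continuous fun y : ℝ => (1 - a * y) ^ 2 + v * y ^ 2 by fun_prop).tendsto 0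
  rw [← div_one (1 : ℝ)]
  refine ((hnum.div hden one_ne_zero).comp tendsto_inv_atTop_zero).congr' ?_
  filter_upwards [eventually_ne_atTop 0] with x hx
  have hx_num : 1 + u * x⁻¹ ^ 2 = (x ^ 2 + u) / x ^ 2 := by field_simp
  have hx_den : (1 - a * x⁻¹) ^ 2 + v * x⁻¹ ^ 2 = ((x - a) ^ 2 + v) / x ^ 2 := by field_simp
  simp only [Function.comp_apply, Pi.div_apply, hx_num, hx_den,
    div_div_div_cancel_right₀ (pow_ne_zero 2 hx)]

lemma tendsto_log_sub_log_of_tendsto_div {α : Type*} {l : Filter α} {f g : α → ℝ}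
    (h : Tendsto (fun x => f x / g x) l (𝓝 1)) :
    Tendsto (fun x => log (f x) - log (g x)) l (𝓝 0) := by
  have hlog := ((continuousAt_log one_ne_zero).tendsto.comp h)
  rw [log_one] at hlog
  refine hlog.congr' ?_
  filter_upwards [h.eventually_ne one_ne_zero] with x hx
  obtain ⟨hf, hg⟩ := div_ne_zero_iff.1 hx
  exact log_div hf hg

lemma abs_log_sq_add_sq_sub_log_le (a y : ℝ) {c : ℝ} (hc : 1 ≤ c) :
    |log (y ^ 2 + c ^ 2) - log (a ^ 2 + (1 + c) ^ 2)| ≤ log (y ^ 2 + 1) + log (a ^ 2 + 4) := by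
  have hy : 0 < y ^ 2 + c ^ 2 := by positivity
  have hK : 0 < a ^ 2 + (1 + c) ^ 2 := by positivity
  have hy₀ : 0 ≤ log (y ^ 2 + 1) := log_nonneg (by nlinarith [sq_nonneg y])
  have ha₀ : 0 ≤ log (a ^ 2 + 4) := log_nonneg (by nlinarith [sq_nonneg a])
  have hlow : (a ^ 2 + 4)⁻¹ ≤ (y ^ 2 + c ^ 2) / (a ^ 2 + (1 + c) ^ 2) := by
    rw [inv_eq_one_div, div_le_div_iff₀ (by positivity) hK]
    nlinarith [mul_le_mul_of_nonneg_left (one_le_pow₀ (n := 2) hc) (sq_nonneg a), sq_nonneg y,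
      mul_nonneg (sq_nonneg y) (sq_nonneg a)]
  have hup : (y ^ 2 + c ^ 2) / (a ^ 2 + (1 + c) ^ 2) ≤ y ^ 2 + 1 := by
    rw [div_le_iff₀ hK]
    nlinarith [sq_nonneg y, sq_nonneg a, mul_nonneg (sq_nonneg y) (sq_nonneg a),
      mul_nonneg (sq_nonneg y) (sq_nonneg (1 + c))]
  rw [← log_div hy.ne' hK.ne', abs_le]
  constructor
  · linarith [log_le_log (by positivity) hlow, log_inv (a ^ 2 + 4)]
  · linarith [log_le_log (by positivity) hup]

/-- A primitive of `(x² + 1)⁻¹ ((x - a)² + b²)⁻¹`, by partial fractions. The denominator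
`(a² + b² - 1)² + 4a² = (a² + (b - 1)²) (a² + (b + 1)²)` vanishes only at `a = 0, b = 1`. -/
noncomputable def rationalPrimitive (a b x : ℝ) : ℝ :=
  (a * (log (x ^ 2 + 1) - log ((x - a) ^ 2 + b ^ 2)) + (a ^ 2 + b ^ 2 - 1) * arctan x
    + (1 + a ^ 2 - b ^ 2) / b * arctan ((x - a) / b)) / ((a ^ 2 + b ^ 2 - 1) ^ 2 + 4 * a ^ 2)

section rationalPrimitive

variable {a b : ℝ}

lemma hasDerivAt_rationalPrimitive (hb : b ≠ 0) (hΔ : (a ^ 2 + b ^ 2 - 1) ^ 2 + 4 * a ^ 2 ≠ 0)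
    (x : ℝ) : HasDerivAt (rationalPrimitive a b) ((x ^ 2 + 1)⁻¹ * ((x - a) ^ 2 + b ^ 2)⁻¹) x := by
  have h₁ : x ^ 2 + 1 ≠ 0 := by positivity
  have h₂ : (x - a) ^ 2 + b ^ 2 ≠ 0 := by positivity
  have hlog₁ : HasDerivAt (fun x => log (x ^ 2 + 1)) (2 * x / (x ^ 2 + 1)) x := by
    simpa using ((hasDerivAt_pow 2 x).add_const 1).log h₁
  have hlog₂ : HasDerivAt (fun x => log ((x - a) ^ 2 + b ^ 2))
      (2 * (x - a) / ((x - a) ^ 2 + b ^ 2)) x := by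
    simpa using ((((hasDerivAt_id x).sub_const a).pow 2).add_const (b ^ 2)).log h₂
  have harctan : HasDerivAt (fun x => arctan ((x - a) / b))
      (1 / (1 + ((x - a) / b) ^ 2) * (1 / b)) x :=
    (hasDerivAt_arctan _).comp x (by simpa using ((hasDerivAt_id x).sub_const a).div_const b)
  refine ((((hlog₁.sub hlog₂).const_mul a).add ((hasDerivAt_arctan x).const_mul _)).add
    (harctan.const_mul _)).div_const _ |>.congr_deriv ?_
  rw [div_eq_iff hΔ]
  field_simp
  ring

lemma tendsto_rationalPrimitive_atTop (hb : 0 < b) :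
    Tendsto (rationalPrimitive a b) atTop
      (𝓝 (((a ^ 2 + b ^ 2 - 1) + (1 + a ^ 2 - b ^ 2) / b) * (π / 2)
        / ((a ^ 2 + b ^ 2 - 1) ^ 2 + 4 * a ^ 2))) := by
  have hlog := tendsto_log_sub_log_of_tendsto_div (tendsto_sq_add_div_sq_add a 1 (b ^ 2))
  have harctan := tendsto_nhds_of_tendsto_nhdsWithin tendsto_arctan_atTop
  have harctan' :=
    harctan.comp ((tendsto_atTop_add_const_right _ (-a) tendsto_id).atTop_div_const hb)
  convert (((hlog.const_mul a).add (harctan.const_mul (a ^ 2 + b ^ 2 - 1))).add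
    (harctan'.const_mul ((1 + a ^ 2 - b ^ 2) / b))).div_const
      ((a ^ 2 + b ^ 2 - 1) ^ 2 + 4 * a ^ 2) using 2
  · simp [rationalPrimitive, sub_eq_add_neg]
  · ring

lemma tendsto_rationalPrimitive_atBot (hb : 0 < b) :
    Tendsto (rationalPrimitive a b) atBot
      (𝓝 (-(((a ^ 2 + b ^ 2 - 1) + (1 + a ^ 2 - b ^ 2) / b) * (π / 2)
        / ((a ^ 2 + b ^ 2 - 1) ^ 2 + 4 * a ^ 2)))) := by
  have hratio := (tendsto_sq_add_div_sq_add (-a) 1 (b ^ 2)).comp tendsto_neg_atBot_atTop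
  have hlog := tendsto_log_sub_log_of_tendsto_div (f := fun x : ℝ => x ^ 2 + 1)
    (g := fun x => (x - a) ^ 2 + b ^ 2) (hratio.congr fun x => by simp; ring_nf)
  have harctan := tendsto_nhds_of_tendsto_nhdsWithin tendsto_arctan_atBot
  have harctan' :=
    harctan.comp ((tendsto_atBot_add_const_right _ (-a) tendsto_id).atBot_div_const hb)
  convert (((hlog.const_mul a).add (harctan.const_mul (a ^ 2 + b ^ 2 - 1))).add
    (harctan'.const_mul ((1 + a ^ 2 - b ^ 2) / b))).div_const
      ((a ^ 2 + b ^ 2 - 1) ^ 2 + 4 * a ^ 2) using 2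
  · simp [rationalPrimitive, sub_eq_add_neg]
  · ring

lemma integrable_inv_sq_add_one_mul_inv_sq_add_sq (a : ℝ) (hb : b ≠ 0) :
    Integrable fun x : ℝ => (x ^ 2 + 1)⁻¹ * ((x - a) ^ 2 + b ^ 2)⁻¹ := by
  refine (integrable_inv_one_add_sq.mul_const (b ^ 2)⁻¹).mono' (by fun_prop)
    (ae_of_all _ fun x => ?_)
  rw [norm_of_nonneg (by positivity), add_comm (x ^ 2)]
  gcongr
  nlinarith [sq_nonneg (x - a)]

lemma integral_inv_sq_add_one_mul_inv_sq_add_sq (ha : a ≠ 0) (hb : 0 < b) :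
    ∫ x : ℝ, (x ^ 2 + 1)⁻¹ * ((x - a) ^ 2 + b ^ 2)⁻¹
      = π * (1 + b) / (b * (a ^ 2 + (1 + b) ^ 2)) := by
  have hΔ : (a ^ 2 + b ^ 2 - 1) ^ 2 + 4 * a ^ 2 ≠ 0 := by positivity
  rw [integral_of_hasDerivAt_of_tendsto (hasDerivAt_rationalPrimitive hb.ne' hΔ)
    (integrable_inv_sq_add_one_mul_inv_sq_add_sq a hb.ne') (tendsto_rationalPrimitive_atBot hb)
    (tendsto_rationalPrimitive_atTop hb)]
  field_simp
  ring

end rationalPrimitive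

lemma hasDerivAt_integral_cauchyPDFReal_mul_log {a : ℝ} (ha : a ≠ 0) {c : ℝ} (hc : 0 < c) :
    HasDerivAt (fun c => ∫ x, cauchyPDFReal 0 1 x * log ((x - a) ^ 2 + c ^ 2))
      (2 * (1 + c) / (a ^ 2 + (1 + c) ^ 2)) c := by
  have hball : Metric.ball c (c / 2) ∈ 𝓝 c := Metric.ball_mem_nhds c (by positivity)
  have hderiv : ∀ x, ∀ c' ∈ Metric.ball c (c / 2),
      HasDerivAt (fun c => cauchyPDFReal 0 1 x * log ((x - a) ^ 2 + c ^ 2))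
        (cauchyPDFReal 0 1 x * (2 * c' * ((x - a) ^ 2 + c' ^ 2)⁻¹)) c' := by
    intro x c' hc'
    have hc' : 0 < c' := by rw [Metric.mem_ball, dist_eq, abs_lt] at hc'; linarith
    have := (((hasDerivAt_pow 2 c').const_add ((x - a) ^ 2)).log (by positivity)).const_mul
      (cauchyPDFReal 0 1 x)
    simpa [div_eq_mul_inv] using this
  have hbound : ∀ x, ∀ c' ∈ Metric.ball c (c / 2),
      ‖cauchyPDFReal 0 1 x * (2 * c' * ((x - a) ^ 2 + c' ^ 2)⁻¹)‖
        ≤ cauchyPDFReal 0 1 x * (4 / c) := by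
    intro x c' hc'
    have hc' : c / 2 < c' := by rw [Metric.mem_ball, dist_eq, abs_lt] at hc'; linarith
    have hpos : 0 < c' := by linarith
    have hp := (cauchyPDF_pos 0 one_ne_zero x).le
    rw [norm_of_nonneg (by positivity)]
    gcongr
    rw [← div_eq_mul_inv, div_le_div_iff₀ (by positivity) (by positivity)]
    nlinarith [sq_nonneg (x - a)]
  have key := hasDerivAt_integral_of_dominated_loc_of_deriv_le hball
    (Eventually.of_forall fun c' => (integrable_cauchyPDFReal 0).aestronglyMeasurable.mul
      (by fun_prop : Measurable _).aestronglyMeasurable)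
    (integrable_cauchyPDFReal_mul_log_sq_add_sq 0 a hc.ne')
    ((integrable_cauchyPDFReal 0).aestronglyMeasurable.mul
      (by fun_prop : Measurable _).aestronglyMeasurable)
    (ae_of_all _ hbound) ((integrable_cauchyPDFReal 0).mul_const _) (ae_of_all _ hderiv)
  refine key.2.congr_deriv ?_
  have hint : ∫ x, cauchyPDFReal 0 1 x * (2 * c * ((x - a) ^ 2 + c ^ 2)⁻¹)
      = 2 * c * π⁻¹ * ∫ x : ℝ, (x ^ 2 + 1)⁻¹ * ((x - a) ^ 2 + c ^ 2)⁻¹ := by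
    rw [← integral_const_mul]
    simp only [cauchyPDFReal_zero_one]
    congr 1 with x
    ring
  rw [hint, integral_inv_sq_add_one_mul_inv_sq_add_sq ha hc]
  field_simp

lemma tendsto_integral_cauchyPDFReal_mul_log_sub_log (a : ℝ) :
    Tendsto (fun c => (∫ x, cauchyPDFReal 0 1 x * log ((x - a) ^ 2 + c ^ 2))
      - log (a ^ 2 + (1 + c) ^ 2)) atTop (𝓝 0) := by
  set p := cauchyPDFReal 0 1
  have hsub : ∀ c ≠ 0, (∫ x, p x * log ((x - a) ^ 2 + c ^ 2)) - log (a ^ 2 + (1 + c) ^ 2)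
      = ∫ x, p x * (log ((x - a) ^ 2 + c ^ 2) - log (a ^ 2 + (1 + c) ^ 2)) := by
    intro c hc
    simp only [mul_sub]
    rw [integral_sub (integrable_cauchyPDFReal_mul_log_sq_add_sq 0 a hc)
      ((integrable_cauchyPDFReal 0).mul_const _), integral_mul_const,
      integral_cauchyPDFReal_eq_one 0 one_ne_zero, one_mul]
  have hlim : ∀ x, Tendsto (fun c => p x * (log ((x - a) ^ 2 + c ^ 2)
      - log (a ^ 2 + (1 + c) ^ 2))) atTop (𝓝 0) := by
    intro x
    have hratio := tendsto_sq_add_div_sq_add (-1) ((x - a) ^ 2) (a ^ 2)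
    simpa using (tendsto_log_sub_log_of_tendsto_div
      (hratio.congr fun c => by ring_nf)).const_mul (p x)
  have hdct := tendsto_integral_filter_of_dominated_convergence
    (F := fun c x => p x * (log ((x - a) ^ 2 + c ^ 2) - log (a ^ 2 + (1 + c) ^ 2)))
    (fun x => p x * (log ((x - a) ^ 2 + 1 ^ 2) + log (a ^ 2 + 4)))
    (Eventually.of_forall fun c => (integrable_cauchyPDFReal 0).aestronglyMeasurable.mul
      (by fun_prop : Measurable _).aestronglyMeasurable)
    ((eventually_ge_atTop 1).mono fun c hc => ae_of_all _ fun x => ?_)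
    ((integrable_cauchyPDFReal_mul_log_sq_add_sq 0 a one_ne_zero).add
      ((integrable_cauchyPDFReal 0 (γ := 1)).mul_const (log (a ^ 2 + 4)))
      |>.congr (ae_of_all _ fun x => by simp [p, mul_add]))
    (ae_of_all _ hlim)
  · rw [integral_zero] at hdct
    refine hdct.congr' ((eventually_ne_atTop 0).mono fun c hc => (hsub c hc).symm)
  · rw [norm_mul, norm_of_nonneg (cauchyPDF_pos 0 one_ne_zero x).le, norm_eq_abs, one_pow]
    exact mul_le_mul_of_nonneg_left (abs_log_sq_add_sq_sub_log_le a _ hc)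
      (cauchyPDF_pos 0 one_ne_zero x).le

lemma integral_cauchyPDFReal_zero_mul_log_sq_add_sq {a b : ℝ} (ha : a ≠ 0) (hb : 0 < b) :
    ∫ x, cauchyPDFReal 0 1 x * log ((x - a) ^ 2 + b ^ 2) = log (a ^ 2 + (1 + b) ^ 2) := by
  set F := fun c => ∫ x, cauchyPDFReal 0 1 x * log ((x - a) ^ 2 + c ^ 2)
  set G := fun c : ℝ => log (a ^ 2 + (1 + c) ^ 2)
  have hG : ∀ c > 0, HasDerivAt G (2 * (1 + c) / (a ^ 2 + (1 + c) ^ 2)) c := fun c hc => by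
    have hpos : a ^ 2 + (1 + c) ^ 2 ≠ 0 := by positivity
    simpa using ((((hasDerivAt_id' c).const_add 1).pow 2).const_add (a ^ 2)).log hpos
  have hF c (hc : 0 < c) := hasDerivAt_integral_cauchyPDFReal_mul_log ha hc
  obtain ⟨k, hk⟩ := isOpen_Ioi.exists_eq_add_of_deriv_eq (convex_Ioi 0).isPreconnected
    (fun c hc => (hF c hc).differentiableAt.differentiableWithinAt)
    (fun c hc => (hG c hc).differentiableAt.differentiableWithinAt)
    (fun c hc => (hF c hc).deriv.trans (hG c hc).deriv.symm)
  have hk₀ : k = 0 := by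
    refine tendsto_nhds_unique (tendsto_const_nhds.congr' ?_)
      (tendsto_integral_cauchyPDFReal_mul_log_sub_log a)
    filter_upwards [eventually_gt_atTop 0] with c hc
    simp [G, hk hc]
  simpa [F, G, hk₀] using hk hb

theorem integral_cauchyPDFReal_mul_log_sq_add_sq {x₀ a b : ℝ} (ha : a ≠ x₀) (hb : 0 < b) :
    ∫ x, cauchyPDFReal x₀ 1 x * log ((x - a) ^ 2 + b ^ 2) = log ((a - x₀) ^ 2 + (1 + b) ^ 2) := by
  have h := integral_sub_right_eq_self (μ := volume)
    (fun y => cauchyPDFReal 0 1 y * log ((y - (a - x₀)) ^ 2 + b ^ 2)) x₀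
  simp only [sub_sub_sub_cancel_right, ← cauchyPDFReal_eq_cauchyPDFReal_zero] at h
  rw [h, integral_cauchyPDFReal_zero_mul_log_sq_add_sq (sub_ne_zero.2 ha) hb]

noncomputable def cauchyMixture (θ x : ℝ) : ℝ :=
  (1 - θ) * cauchyPDFReal 0 1 x + θ * cauchyPDFReal 1 1 x

section cauchyMixture

variable {θ₁ θ₂ a b : ℝ}

lemma cauchyMixture_eq (θ x : ℝ) : cauchyMixture θ x
    = ((x - (1 - θ)) ^ 2 + (1 + θ - θ ^ 2)) / (π * ((x ^ 2 + 1) * ((x - 1) ^ 2 + 1))) := by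
  simp only [cauchyMixture, cauchyPDFReal_eq_cauchyPDFReal_zero 1, cauchyPDFReal_zero_one]
  field_simp
  ring

lemma log_cauchyMixture_div_cauchyMixture (h₁ : 0 < 1 + θ₁ - θ₁ ^ 2) (h₂ : 0 < 1 + θ₂ - θ₂ ^ 2)
    (x : ℝ) : log (cauchyMixture θ₁ x / cauchyMixture θ₂ x)
      = log ((x - (1 - θ₁)) ^ 2 + (1 + θ₁ - θ₁ ^ 2))
        - log ((x - (1 - θ₂)) ^ 2 + (1 + θ₂ - θ₂ ^ 2)) := by
  rw [cauchyMixture_eq, cauchyMixture_eq, div_div_div_cancel_right₀ (by positivity),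
    log_div (by positivity) (by positivity)]

lemma integral_cauchyMixture_mul_log_sq_add_sq (θ : ℝ) (ha₀ : a ≠ 0) (ha₁ : a ≠ 1) (hb : 0 < b) :
    ∫ x, cauchyMixture θ x * log ((x - a) ^ 2 + b ^ 2)
      = (1 - θ) * log (a ^ 2 + (1 + b) ^ 2) + θ * log ((a - 1) ^ 2 + (1 + b) ^ 2) := by
  simp only [cauchyMixture, add_mul, mul_assoc]
  rw [integral_add ((integrable_cauchyPDFReal_mul_log_sq_add_sq 0 a hb.ne').const_mul _)
      ((integrable_cauchyPDFReal_mul_log_sq_add_sq 1 a hb.ne').const_mul _),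
    integral_const_mul, integral_const_mul, integral_cauchyPDFReal_mul_log_sq_add_sq ha₀ hb,
    integral_cauchyPDFReal_mul_log_sq_add_sq ha₁ hb, sub_zero]

lemma integrable_cauchyMixture_mul_log_sq_add (θ a : ℝ) {c : ℝ} (hc : 0 < c) :
    Integrable fun x => cauchyMixture θ x * log ((x - a) ^ 2 + c) := by
  have h x₀ := integrable_cauchyPDFReal_mul_log_sq_add_sq x₀ a (sqrt_pos.2 hc).ne'
  simp only [sq_sqrt hc.le] at h
  simp only [cauchyMixture, add_mul, mul_assoc]
  exact ((h 0).const_mul _).add ((h 1).const_mul _)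

lemma integral_cauchyMixture_mul_log_numerator (θ : ℝ) {θ' : ℝ} (hθ' : θ' ∈ Ioo 0 1) :
    ∫ x, cauchyMixture θ x * log ((x - (1 - θ')) ^ 2 + (1 + θ' - θ' ^ 2))
      = (1 - θ) * log (2 * √(1 + θ' - θ' ^ 2) - θ' + 3)
        + θ * log (2 * √(1 + θ' - θ' ^ 2) + θ' + 2) := by
  obtain ⟨h₀, h₁⟩ := hθ'
  have hs : √(1 + θ' - θ' ^ 2) ^ 2 = 1 + θ' - θ' ^ 2 := sq_sqrt (by nlinarith)
  have hs₀ : 0 < √(1 + θ' - θ' ^ 2) := sqrt_pos.2 (by nlinarith)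
  rw [← hs, integral_cauchyMixture_mul_log_sq_add_sq θ (by linarith) (by linarith) hs₀, hs]
  congr 3 <;> linear_combination hs

end cauchyMixture

/-- Closed form of the Kullback–Leibler divergence between two mixtures of the
prescribed Cauchy components `p_{0,1}` and `p_{1,1}`. -/
theorem kl_cauchy_mixtures_0111 (θ1 θ2 : ℝ)
    (hθ1 : θ1 ∈ Set.Ioo (0 : ℝ) 1) (hθ2 : θ2 ∈ Set.Ioo (0 : ℝ) 1) :
    ∫ x : ℝ,
        ((1 - θ1) * (1 / (π * (1 + x ^ 2))) + θ1 * (1 / (π * (1 + (x - 1) ^ 2)))) *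
          Real.log
            (((1 - θ1) * (1 / (π * (1 + x ^ 2))) + θ1 * (1 / (π * (1 + (x - 1) ^ 2)))) /
              ((1 - θ2) * (1 / (π * (1 + x ^ 2))) + θ2 * (1 / (π * (1 + (x - 1) ^ 2))))) =
      θ1 * Real.log (((2 * Real.sqrt (1 + θ1 - θ1 ^ 2) + θ1 + 2) *
            (2 * Real.sqrt (1 + θ2 - θ2 ^ 2) - θ2 + 3)) /
          ((2 * Real.sqrt (1 + θ1 - θ1 ^ 2) - θ1 + 3) *
            (2 * Real.sqrt (1 + θ2 - θ2 ^ 2) + θ2 + 2))) +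
        Real.log ((2 * Real.sqrt (1 + θ1 - θ1 ^ 2) - θ1 + 3) /
          (2 * Real.sqrt (1 + θ2 - θ2 ^ 2) - θ2 + 3)) := by
  have hmix : ∀ θ x : ℝ, (1 - θ) * (1 / (π * (1 + x ^ 2))) + θ * (1 / (π * (1 + (x - 1) ^ 2)))
      = cauchyMixture θ x := fun θ x => by
    simp only [cauchyMixture, cauchyPDFReal_def, NNReal.coe_one, one_pow, sub_zero, one_div,
      mul_inv]
    ring
  have hc₁ : 0 < 1 + θ1 - θ1 ^ 2 := by nlinarith [hθ1.1, hθ1.2]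
  have hc₂ : 0 < 1 + θ2 - θ2 ^ 2 := by nlinarith [hθ2.1, hθ2.2]
  simp only [hmix, log_cauchyMixture_div_cauchyMixture hc₁ hc₂, mul_sub]
  rw [integral_sub (integrable_cauchyMixture_mul_log_sq_add θ1 _ hc₁)
      (integrable_cauchyMixture_mul_log_sq_add θ1 _ hc₂),
    integral_cauchyMixture_mul_log_numerator θ1 hθ1,
    integral_cauchyMixture_mul_log_numerator θ1 hθ2]
  have hs₁ := sqrt_nonneg (1 + θ1 - θ1 ^ 2)
  have hs₂ := sqrt_nonneg (1 + θ2 - θ2 ^ 2)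
  have h₁ : 0 < 2 * √(1 + θ1 - θ1 ^ 2) - θ1 + 3 := by linarith [hθ1.2]
  have h₁' : 0 < 2 * √(1 + θ1 - θ1 ^ 2) + θ1 + 2 := by linarith [hθ1.1]
  have h₂ : 0 < 2 * √(1 + θ2 - θ2 ^ 2) - θ2 + 3 := by linarith [hθ2.2]
  have h₂' : 0 < 2 * √(1 + θ2 - θ2 ^ 2) + θ2 + 2 := by linarith [hθ2.1]
  rw [log_div (by positivity) (by positivity), log_mul h₁'.ne' h₂.ne', log_mul h₁.ne' h₂'.ne',
    log_div h₁.ne' h₂.ne']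
  ring
end

section
/- Let p_{0,1}(x) = 1/(π(1+x²)) and p_{1,1}(x) = 1/(π(1+(x−1)²)), and for θ ∈ (0,1) let m_θ = (1−θ)·p_{0,1} + θ·p_{1,1}, F(θ) = ∫_ℝ m_θ(x)·log m_θ(x) dx, and η(θ) = log( (2·√(1+θ−θ²)+θ+2) / (2·√(1+θ−θ²)−θ+3) ). Then for every θ ∈ (0,1), the dual Legendre potential expressed in the θ-coordinate satisfies θ·η(θ) − F(θ) = log( 20·π / (2·√(1+θ−θ²)−θ+3) ). -/
/-
With `a = 1 - θ` and `b = √(1 + θ - θ²)` the mixture density is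
`m_θ(x) = ((x - a)² + b²) / (π (1 + x²) (1 + (x - 1)²))`, so `F θ` is a combination of integrals
of `log ((x - c)² + d²)` against the Cauchy densities `p_{0,1}` and `p_{1,1}`. These are given by
`∫ p_{l,1}(x) log ((x - c)² + d²) dx = log ((l - c)² + (1 + d)²)` for `d > 0`: both sides have the
same derivative in `d` (on the left a rational integral, evaluated by partial fractions) and both
are `2 log d + o(1)` as `d → ∞`.
-/

open MeasureTheory Real Filter Set Topology Bornology ProbabilityTheory

lemma tendsto_log_sq_add_sq_sub_log_sq (c d : ℝ) :
    Tendsto (fun x : ℝ => log ((x - c) ^ 2 + d ^ 2) - log (x ^ 2)) (cobounded ℝ) (𝓝 0) := by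
  have hg : Tendsto (fun s : ℝ => log ((1 - c * s) ^ 2 + (d * s) ^ 2)) (𝓝 0) (𝓝 0) := by
    have : ContinuousAt (fun s : ℝ => log ((1 - c * s) ^ 2 + (d * s) ^ 2)) 0 := by
      fun_prop (disch := simp)
    simpa using this.tendsto
  refine (hg.comp tendsto_inv₀_cobounded).congr' ?_
  filter_upwards [eventually_ne_cobounded 0, eventually_ne_cobounded c] with x hx hxc
  have hq : (x - c) ^ 2 + d ^ 2 ≠ 0 := by positivity
  rw [Function.comp_apply, ← log_div hq (by positivity)]
  field_simp

lemma tendsto_div_one_add_sq_cobounded :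
    Tendsto (fun x : ℝ => x / (1 + x ^ 2)) (cobounded ℝ) (𝓝 0) := by
  have hg : Tendsto (fun s : ℝ => s / (s ^ 2 + 1)) (𝓝 0) (𝓝 0) := by
    have : ContinuousAt (fun s : ℝ => s / (s ^ 2 + 1)) 0 := by fun_prop (disch := positivity)
    simpa using this.tendsto
  refine (hg.comp tendsto_inv₀_cobounded).congr' ?_
  filter_upwards [eventually_ne_cobounded 0] with x hx
  rw [Function.comp_apply]
  field_simp

lemma tendsto_arctan_sub_div_atTop (c : ℝ) {d : ℝ} (hd : 0 < d) :
    Tendsto (fun x : ℝ => arctan ((x - c) / d)) atTop (𝓝 (π / 2)) :=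
  (tendsto_arctan_atTop.mono_right nhdsWithin_le_nhds).comp
    ((tendsto_atTop_add_const_right _ (-c) tendsto_id).atTop_div_const hd)

lemma tendsto_arctan_sub_div_atBot (c : ℝ) {d : ℝ} (hd : 0 < d) :
    Tendsto (fun x : ℝ => arctan ((x - c) / d)) atBot (𝓝 (-(π / 2))) :=
  (tendsto_arctan_atBot.mono_right nhdsWithin_le_nhds).comp
    ((tendsto_atBot_add_const_right _ (-c) tendsto_id).atBot_div_const hd)

lemma integrable_inv_one_add_sq_mul_inv (c : ℝ) {d : ℝ} (hd : d ≠ 0) :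
    Integrable fun x : ℝ => (1 + x ^ 2)⁻¹ * ((x - c) ^ 2 + d ^ 2)⁻¹ := by
  refine integrable_inv_one_add_sq.mul_bdd (c := (d ^ 2)⁻¹) (by fun_prop) (ae_of_all _ fun x => ?_)
  rw [norm_inv, Real.norm_of_nonneg (by positivity)]
  exact inv_anti₀ (by positivity) (le_add_of_nonneg_left (sq_nonneg _))

lemma integral_inv_one_add_sq_mul_self : ∫ x : ℝ, (1 + x ^ 2)⁻¹ * (1 + x ^ 2)⁻¹ = π / 2 := by
  have hderiv (x : ℝ) : HasDerivAt (fun x => (arctan x + x / (1 + x ^ 2)) / 2)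
      ((1 + x ^ 2)⁻¹ * (1 + x ^ 2)⁻¹) x := by
    have hP : HasDerivAt (fun x : ℝ => 1 + x ^ 2) (2 * x) x := by
      simpa using ((hasDerivAt_id x).pow 2).const_add 1
    refine (((hasDerivAt_arctan x).add ((hasDerivAt_id' x).div hP (by positivity))).div_const
      2).congr_deriv ?_
    field_simp
    ring
  have h := integral_of_hasDerivAt_of_tendsto hderiv
    (by simpa [add_comm] using integrable_inv_one_add_sq_mul_inv 0 one_ne_zero)
    (((tendsto_arctan_atBot.mono_right nhdsWithin_le_nhds).add
      (tendsto_div_one_add_sq_cobounded.mono_left IsOrderBornology.atBot_le_cobounded)).div_const 2)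
    (((tendsto_arctan_atTop.mono_right nhdsWithin_le_nhds).add
      (tendsto_div_one_add_sq_cobounded.mono_left IsOrderBornology.atTop_le_cobounded)).div_const 2)
  rw [h]
  ring

lemma hasDerivAt_primitive_inv_one_add_sq_mul_inv (c : ℝ) {d : ℝ} (hd : d ≠ 0)
    (hΔ : (c ^ 2 + (d + 1) ^ 2) * (c ^ 2 + (d - 1) ^ 2) ≠ 0) (x : ℝ) :
    HasDerivAt (fun x : ℝ => (c * (log (1 + x ^ 2) - log ((x - c) ^ 2 + d ^ 2))
        + (c ^ 2 + d ^ 2 - 1) * arctan x + (1 + c ^ 2 - d ^ 2) / d * arctan ((x - c) / d))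
        / ((c ^ 2 + (d + 1) ^ 2) * (c ^ 2 + (d - 1) ^ 2)))
      ((1 + x ^ 2)⁻¹ * ((x - c) ^ 2 + d ^ 2)⁻¹) x := by
  have hP : HasDerivAt (fun x : ℝ => 1 + x ^ 2) (2 * x) x := by
    simpa using ((hasDerivAt_id x).pow 2).const_add 1
  have hQ : HasDerivAt (fun x : ℝ => (x - c) ^ 2 + d ^ 2) (2 * (x - c)) x := by
    simpa using (((hasDerivAt_id x).sub_const c).pow 2).add_const (d ^ 2)
  have hA : HasDerivAt (fun x : ℝ => arctan ((x - c) / d))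
      (1 / (1 + ((x - c) / d) ^ 2) * (1 / d)) x := by
    simpa using (((hasDerivAt_id x).sub_const c).div_const d).arctan
  have h := ((((hP.log (by positivity)).sub (hQ.log (by positivity))).const_mul c).add
    ((hasDerivAt_arctan x).const_mul (c ^ 2 + d ^ 2 - 1))).add
    (hA.const_mul ((1 + c ^ 2 - d ^ 2) / d))
  refine (h.div_const _).congr_deriv ?_
  rw [div_eq_iff hΔ]
  field_simp
  ring

lemma integral_inv_one_add_sq_mul_inv (c : ℝ) {d : ℝ} (hd : 0 < d) :
    ∫ x : ℝ, (1 + x ^ 2)⁻¹ * ((x - c) ^ 2 + d ^ 2)⁻¹ =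
      π * (1 + d) / (d * (c ^ 2 + (1 + d) ^ 2)) := by
  -- at `(c, d) = (0, 1)` the partial fraction decomposition below degenerates
  by_cases hdeg : c = 0 ∧ d = 1
  · obtain ⟨rfl, rfl⟩ := hdeg
    simp only [sub_zero, one_pow, add_comm _ (1 : ℝ), integral_inv_one_add_sq_mul_self]
    ring
  have hΔ : (c ^ 2 + (d + 1) ^ 2) * (c ^ 2 + (d - 1) ^ 2) ≠ 0 := by
    refine mul_ne_zero (by positivity) fun h => hdeg ⟨?_, ?_⟩ <;>
      nlinarith [sq_nonneg c, sq_nonneg (d - 1)]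
  have hlog : Tendsto (fun x : ℝ => log (1 + x ^ 2) - log ((x - c) ^ 2 + d ^ 2))
      (cobounded ℝ) (𝓝 0) := by
    simpa [add_comm] using
      (tendsto_log_sq_add_sq_sub_log_sq 0 1).sub (tendsto_log_sq_add_sq_sub_log_sq c d)
  have hbot := ((((hlog.mono_left IsOrderBornology.atBot_le_cobounded).const_mul c).add
    ((tendsto_arctan_atBot.mono_right nhdsWithin_le_nhds).const_mul (c ^ 2 + d ^ 2 - 1))).add
    ((tendsto_arctan_sub_div_atBot c hd).const_mul ((1 + c ^ 2 - d ^ 2) / d))).div_const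
    ((c ^ 2 + (d + 1) ^ 2) * (c ^ 2 + (d - 1) ^ 2))
  have htop := ((((hlog.mono_left IsOrderBornology.atTop_le_cobounded).const_mul c).add
    ((tendsto_arctan_atTop.mono_right nhdsWithin_le_nhds).const_mul (c ^ 2 + d ^ 2 - 1))).add
    ((tendsto_arctan_sub_div_atTop c hd).const_mul ((1 + c ^ 2 - d ^ 2) / d))).div_const
    ((c ^ 2 + (d + 1) ^ 2) * (c ^ 2 + (d - 1) ^ 2))
  rw [integral_of_hasDerivAt_of_tendsto (hasDerivAt_primitive_inv_one_add_sq_mul_inv c hd.ne' hΔ)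
    (integrable_inv_one_add_sq_mul_inv c hd.ne') hbot htop]
  have hΔ' := right_ne_zero_of_mul hΔ
  field_simp
  ring

lemma abs_log_sq_add_sq_le (c : ℝ) {d : ℝ} (hd : d ≠ 0) (x : ℝ) :
    |log ((x - c) ^ 2 + d ^ 2)| ≤
      (|log (d ^ 2)| + log (2 + 2 * c ^ 2 + d ^ 2) + 4) * (1 + x ^ 2) ^ (1 / 4 : ℝ) := by
  have hw : 1 ≤ (1 + x ^ 2) ^ (1 / 4 : ℝ) :=
    one_le_rpow (le_add_of_nonneg_right (sq_nonneg x)) (by norm_num)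
  have hM : 0 ≤ log (2 + 2 * c ^ 2 + d ^ 2) := log_nonneg (by nlinarith)
  have hlower : log (d ^ 2) ≤ log ((x - c) ^ 2 + d ^ 2) :=
    log_le_log (by positivity) (le_add_of_nonneg_left (sq_nonneg _))
  have hupper : log ((x - c) ^ 2 + d ^ 2) ≤ log (2 + 2 * c ^ 2 + d ^ 2) + log (1 + x ^ 2) := by
    rw [← log_mul (by positivity) (by positivity)]
    exact log_le_log (by positivity) (by nlinarith [sq_nonneg (x + c), sq_nonneg x, sq_nonneg c])
  have hgrowth : log (1 + x ^ 2) ≤ 4 * (1 + x ^ 2) ^ (1 / 4 : ℝ) := by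
    simpa [div_div_eq_mul_div, mul_comm] using log_le_rpow_div (by positivity : (0 : ℝ) ≤ 1 + x ^ 2)
      (by norm_num : (0 : ℝ) < 1 / 4)
  rw [abs_le]
  constructor <;> nlinarith [abs_nonneg (log (d ^ 2)), le_abs_self (log (d ^ 2)),
    neg_abs_le (log (d ^ 2))]

lemma integrable_inv_one_add_sq_mul_log (c : ℝ) {d : ℝ} (hd : d ≠ 0) :
    Integrable fun x : ℝ => (1 + x ^ 2)⁻¹ * log ((x - c) ^ 2 + d ^ 2) := by
  refine ((integrable_rpow_neg_one_add_norm_sq (E := ℝ) (r := 3 / 2) (by norm_num)).const_mul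
    (|log (d ^ 2)| + log (2 + 2 * c ^ 2 + d ^ 2) + 4)).mono' (by fun_prop) (ae_of_all _ fun x => ?_)
  have hpos : (0 : ℝ) < 1 + x ^ 2 := by positivity
  rw [norm_mul, norm_inv, Real.norm_of_nonneg hpos.le, Real.norm_eq_abs, Real.norm_eq_abs, sq_abs,
    show -(3 / 2 : ℝ) / 2 = -1 + 1 / 4 by norm_num, rpow_add hpos, rpow_neg_one]
  calc (1 + x ^ 2)⁻¹ * |log ((x - c) ^ 2 + d ^ 2)|
      ≤ (1 + x ^ 2)⁻¹ * ((|log (d ^ 2)| + log (2 + 2 * c ^ 2 + d ^ 2) + 4) *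
          (1 + x ^ 2) ^ (1 / 4 : ℝ)) :=
        mul_le_mul_of_nonneg_left (abs_log_sq_add_sq_le c hd x) (by positivity)
    _ = _ := by ring

lemma hasDerivAt_integral_inv_one_add_sq_mul_log (c : ℝ) {t : ℝ} (ht : 0 < t) :
    HasDerivAt (fun s => ∫ x : ℝ, (1 + x ^ 2)⁻¹ * log ((x - c) ^ 2 + s ^ 2))
      (2 * π * (1 + t) / (c ^ 2 + (1 + t) ^ 2)) t := by
  have hderiv (x : ℝ) {s : ℝ} (hs : s ∈ Ioi (t / 2)) :
      HasDerivAt (fun s => (1 + x ^ 2)⁻¹ * log ((x - c) ^ 2 + s ^ 2))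
        ((1 + x ^ 2)⁻¹ * (2 * s / ((x - c) ^ 2 + s ^ 2))) s := by
    have hs0 : 0 < s := (half_pos ht).trans hs
    have hq : HasDerivAt (fun s : ℝ => (x - c) ^ 2 + s ^ 2) (2 * s) s := by
      simpa using ((hasDerivAt_id s).pow 2).const_add ((x - c) ^ 2)
    exact (hq.log (by positivity)).const_mul _
  have hbound (x : ℝ) {s : ℝ} (hs : s ∈ Ioi (t / 2)) :
      ‖(1 + x ^ 2)⁻¹ * (2 * s / ((x - c) ^ 2 + s ^ 2))‖ ≤ (1 + x ^ 2)⁻¹ * (4 / t) := by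
    have hs0 : 0 < s := (half_pos ht).trans hs
    rw [Real.norm_of_nonneg (by positivity)]
    refine mul_le_mul_of_nonneg_left ?_ (by positivity)
    rw [div_le_div_iff₀ (by positivity) ht]
    nlinarith [sq_nonneg (x - c), mem_Ioi.mp hs]
  obtain ⟨-, h⟩ := hasDerivAt_integral_of_dominated_loc_of_deriv_le (Ioi_mem_nhds (half_lt_self ht))
    (Eventually.of_forall fun s => by fun_prop) (integrable_inv_one_add_sq_mul_log c ht.ne')
    (by fun_prop) (ae_of_all _ fun x s hs => hbound x hs)
    (integrable_inv_one_add_sq.mul_const _) (ae_of_all _ fun x s hs => hderiv x hs)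
  refine h.congr_deriv ?_
  have hval (x : ℝ) : (1 + x ^ 2)⁻¹ * (2 * t / ((x - c) ^ 2 + t ^ 2)) =
      2 * t * ((1 + x ^ 2)⁻¹ * ((x - c) ^ 2 + t ^ 2)⁻¹) := by ring
  rw [integral_congr_ae (ae_of_all _ hval), integral_const_mul,
    integral_inv_one_add_sq_mul_inv c ht]
  field_simp

lemma tendsto_integral_inv_one_add_sq_mul_log_sub_log (c : ℝ) :
    Tendsto (fun t => (∫ x : ℝ, (1 + x ^ 2)⁻¹ * log ((x - c) ^ 2 + t ^ 2)) - π * log (t ^ 2))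
      atTop (𝓝 0) := by
  have hbound : ∀ᶠ t in atTop, ∀ᵐ x, ‖(1 + x ^ 2)⁻¹ * log (((x - c) / t) ^ 2 + 1)‖ ≤
      (1 + x ^ 2)⁻¹ * log ((x - c) ^ 2 + 1 ^ 2) := by
    filter_upwards [eventually_ge_atTop 1] with t ht
    refine ae_of_all _ fun x => ?_
    have hlog : 0 ≤ log (((x - c) / t) ^ 2 + 1) :=
      log_nonneg (le_add_of_nonneg_left (sq_nonneg _))
    rw [Real.norm_of_nonneg (by positivity)]
    refine mul_le_mul_of_nonneg_left (log_le_log (by positivity) ?_) (by positivity)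
    rw [one_pow, div_pow]
    gcongr
    exact div_le_self (sq_nonneg _) (one_le_pow₀ ht)
  have hlim (x : ℝ) :
      Tendsto (fun t => (1 + x ^ 2)⁻¹ * log (((x - c) / t) ^ 2 + 1)) atTop (𝓝 0) := by
    have h : Tendsto (fun t : ℝ => ((x - c) / t) ^ 2 + 1) atTop (𝓝 (0 ^ 2 + 1)) :=
      ((tendsto_const_nhds.div_atTop tendsto_id).pow 2).add_const 1
    simpa using ((continuousAt_log (by norm_num)).tendsto.comp h).const_mul (1 + x ^ 2)⁻¹
  have h := tendsto_integral_filter_of_dominated_convergence _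
    (Eventually.of_forall fun t => by fun_prop) hbound
    (integrable_inv_one_add_sq_mul_log c one_ne_zero) (ae_of_all _ hlim)
  rw [integral_zero] at h
  refine h.congr' ?_
  filter_upwards [eventually_gt_atTop 0] with t ht
  have hsplit (x : ℝ) : (1 + x ^ 2)⁻¹ * log (((x - c) / t) ^ 2 + 1) =
      (1 + x ^ 2)⁻¹ * log ((x - c) ^ 2 + t ^ 2) - (1 + x ^ 2)⁻¹ * log (t ^ 2) := by
    rw [← mul_sub, ← log_div (by positivity) (by positivity)]
    field_simp
  rw [integral_congr_ae (ae_of_all _ hsplit),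
    integral_sub (integrable_inv_one_add_sq_mul_log c ht.ne')
      (integrable_inv_one_add_sq.mul_const _),
    integral_mul_const, integral_univ_inv_one_add_sq]

lemma integral_inv_one_add_sq_mul_log (c : ℝ) {d : ℝ} (hd : 0 < d) :
    ∫ x : ℝ, (1 + x ^ 2)⁻¹ * log ((x - c) ^ 2 + d ^ 2) = π * log (c ^ 2 + (1 + d) ^ 2) := by
  have hφ {t : ℝ} (ht : 0 < t) := hasDerivAt_integral_inv_one_add_sq_mul_log c ht
  have hψ {t : ℝ} (ht : 0 < t) : HasDerivAt (fun t => π * log (c ^ 2 + (1 + t) ^ 2))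
      (2 * π * (1 + t) / (c ^ 2 + (1 + t) ^ 2)) t := by
    have hq : HasDerivAt (fun t : ℝ => c ^ 2 + (1 + t) ^ 2) (2 * (1 + t)) t := by
      simpa using (((hasDerivAt_id t).const_add 1).pow 2).const_add (c ^ 2)
    exact ((hq.log (by positivity)).const_mul π).congr_deriv (by ring)
  obtain ⟨a, ha⟩ := isOpen_Ioi.exists_eq_add_of_deriv_eq (convex_Ioi 0).isPreconnected
    (fun t ht => (hφ ht).differentiableAt.differentiableWithinAt)
    (fun t ht => (hψ ht).differentiableAt.differentiableWithinAt)
    (fun t ht => (hφ ht).deriv.trans (hψ ht).deriv.symm)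
  have hψlim : Tendsto (fun t => π * log (c ^ 2 + (1 + t) ^ 2) - π * log (t ^ 2)) atTop (𝓝 0) := by
    simpa [← mul_sub, add_comm] using ((tendsto_log_sq_add_sq_sub_log_sq (-1) c).mono_left
      IsOrderBornology.atTop_le_cobounded).const_mul π
  have ha0 : a = 0 := by
    refine tendsto_nhds_unique (tendsto_const_nhds.congr' ?_)
      (by simpa using (tendsto_integral_inv_one_add_sq_mul_log_sub_log c).sub hψlim)
    filter_upwards [eventually_gt_atTop 0] with t ht
    have h := ha ht
    dsimp only at h
    linarith
  simpa [ha0] using ha hd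

lemma cauchyPDFReal_one_mul_log_eq (l c d x : ℝ) :
    cauchyPDFReal l 1 x * log ((x - c) ^ 2 + d ^ 2) =
      π⁻¹ * ((1 + (x - l) ^ 2)⁻¹ * log ((x - l - (c - l)) ^ 2 + d ^ 2)) := by
  rw [cauchyPDFReal_def, sub_sub_sub_cancel_right]
  simp only [NNReal.coe_one, one_pow, mul_one, add_comm _ (1 : ℝ)]
  ring

lemma integrable_cauchyPDFReal_mul_log (l c : ℝ) {d : ℝ} (hd : d ≠ 0) :
    Integrable fun x => cauchyPDFReal l 1 x * log ((x - c) ^ 2 + d ^ 2) := by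
  simp_rw [cauchyPDFReal_one_mul_log_eq]
  exact ((integrable_inv_one_add_sq_mul_log (c - l) hd).comp_sub_right l).const_mul π⁻¹

lemma integral_cauchyPDFReal_mul_log (l c : ℝ) {d : ℝ} (hd : 0 < d) :
    ∫ x, cauchyPDFReal l 1 x * log ((x - c) ^ 2 + d ^ 2) = log ((l - c) ^ 2 + (1 + d) ^ 2) := by
  simp_rw [cauchyPDFReal_one_mul_log_eq]
  rw [integral_const_mul,
    integral_sub_right_eq_self (fun y => (1 + y ^ 2)⁻¹ * log ((y - (c - l)) ^ 2 + d ^ 2)),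
    integral_inv_one_add_sq_mul_log (c - l) hd, inv_mul_cancel_left₀ pi_ne_zero]
  ring_nf

lemma log_sq_add_sq_div_eq (x a : ℝ) {b : ℝ} (hb : b ≠ 0) :
    log (((x - a) ^ 2 + b ^ 2) / (π * ((1 + x ^ 2) * (1 + (x - 1) ^ 2)))) =
      log ((x - a) ^ 2 + b ^ 2) - log ((x - 0) ^ 2 + 1 ^ 2) - log ((x - 1) ^ 2 + 1 ^ 2) -
        log π := by
  rw [log_div (by positivity) (by positivity), log_mul pi_ne_zero (by positivity),
    log_mul (by positivity) (by positivity)]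
  simp only [sub_zero, one_pow, add_comm _ (1 : ℝ)]
  ring

lemma integrable_cauchyPDFReal_mul_log_sq_add_sq_div (l a : ℝ) {b : ℝ} (hb : b ≠ 0) :
    Integrable fun x => cauchyPDFReal l 1 x *
      log (((x - a) ^ 2 + b ^ 2) / (π * ((1 + x ^ 2) * (1 + (x - 1) ^ 2)))) := by
  simp_rw [log_sq_add_sq_div_eq _ a hb, mul_sub]
  exact (((integrable_cauchyPDFReal_mul_log l a hb).sub'
    (integrable_cauchyPDFReal_mul_log l 0 one_ne_zero)).sub'
    (integrable_cauchyPDFReal_mul_log l 1 one_ne_zero)).sub'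
    ((integrable_cauchyPDFReal l).mul_const _)

lemma integral_cauchyPDFReal_mul_log_sq_add_sq_div (l a : ℝ) {b : ℝ} (hb : 0 < b) :
    ∫ x, cauchyPDFReal l 1 x *
      log (((x - a) ^ 2 + b ^ 2) / (π * ((1 + x ^ 2) * (1 + (x - 1) ^ 2)))) =
      log ((l - a) ^ 2 + (1 + b) ^ 2) - log (l ^ 2 + 4) - log ((l - 1) ^ 2 + 4) - log π := by
  have i1 := integrable_cauchyPDFReal_mul_log l a hb.ne'
  have i2 := integrable_cauchyPDFReal_mul_log l 0 one_ne_zero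
  have i3 := integrable_cauchyPDFReal_mul_log l 1 one_ne_zero
  simp_rw [log_sq_add_sq_div_eq _ a hb.ne', mul_sub]
  rw [integral_sub ((i1.sub' i2).sub' i3) ((integrable_cauchyPDFReal l).mul_const _),
    integral_sub (i1.sub' i2) i3, integral_sub i1 i2, integral_cauchyPDFReal_mul_log l a hb,
    integral_cauchyPDFReal_mul_log l 0 one_pos, integral_cauchyPDFReal_mul_log l 1 one_pos,
    integral_mul_const, integral_cauchyPDFReal_eq_one l one_ne_zero]
  norm_num

lemma cauchy_mixture_mul_log_eq {θ b : ℝ} (hb : b ^ 2 = 1 + θ - θ ^ 2) (x : ℝ) :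
    ((1 - θ) * (1 / (π * (1 + x ^ 2))) + θ * (1 / (π * (1 + (x - 1) ^ 2)))) *
      log ((1 - θ) * (1 / (π * (1 + x ^ 2))) + θ * (1 / (π * (1 + (x - 1) ^ 2)))) =
    (1 - θ) * (cauchyPDFReal 0 1 x *
      log (((x - (1 - θ)) ^ 2 + b ^ 2) / (π * ((1 + x ^ 2) * (1 + (x - 1) ^ 2))))) +
    θ * (cauchyPDFReal 1 1 x *
      log (((x - (1 - θ)) ^ 2 + b ^ 2) / (π * ((1 + x ^ 2) * (1 + (x - 1) ^ 2))))) := by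
  have hmix : (1 - θ) * (1 / (π * (1 + x ^ 2))) + θ * (1 / (π * (1 + (x - 1) ^ 2))) =
      ((x - (1 - θ)) ^ 2 + b ^ 2) / (π * ((1 + x ^ 2) * (1 + (x - 1) ^ 2))) := by
    rw [hb]
    field_simp
    ring
  rw [← hmix]
  simp only [cauchyPDFReal_def, NNReal.coe_one, sub_zero, one_pow, add_comm _ (1 : ℝ), one_div,
    mul_inv]
  ring

/-- The dual Legendre potential of the negentropy of the mixture of `p_{0,1}` and
`p_{1,1}`, expressed in the `θ`-coordinate. -/
theorem dual_potential_theta (F η : ℝ → ℝ)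
    (hF : F = fun θ : ℝ =>
      ∫ x : ℝ, ((1 - θ) * (1 / (π * (1 + x ^ 2))) + θ * (1 / (π * (1 + (x - 1) ^ 2)))) *
        Real.log ((1 - θ) * (1 / (π * (1 + x ^ 2))) +
          θ * (1 / (π * (1 + (x - 1) ^ 2)))))
    (hη : η = fun θ : ℝ =>
      Real.log ((2 * Real.sqrt (1 + θ - θ ^ 2) + θ + 2) /
        (2 * Real.sqrt (1 + θ - θ ^ 2) - θ + 3)))
    (θ : ℝ) (hθ : θ ∈ Set.Ioo (0 : ℝ) 1) :
    θ * η θ - F θ =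
      Real.log (20 * π / (2 * Real.sqrt (1 + θ - θ ^ 2) - θ + 3)) := by
  obtain ⟨hθ0, hθ1⟩ := hθ
  subst hF hη
  set b := √(1 + θ - θ ^ 2)
  have hb2 : b ^ 2 = 1 + θ - θ ^ 2 := sq_sqrt (by nlinarith)
  have hb : 0 < b := sqrt_pos.mpr (by nlinarith)
  dsimp only
  rw [integral_congr_ae (ae_of_all _ (cauchy_mixture_mul_log_eq hb2)),
    integral_add ((integrable_cauchyPDFReal_mul_log_sq_add_sq_div 0 _ hb.ne').const_mul _)
      ((integrable_cauchyPDFReal_mul_log_sq_add_sq_div 1 _ hb.ne').const_mul _),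
    integral_const_mul, integral_const_mul, integral_cauchyPDFReal_mul_log_sq_add_sq_div 0 _ hb,
    integral_cauchyPDFReal_mul_log_sq_add_sq_div 1 _ hb]
  have hD : (0 - (1 - θ)) ^ 2 + (1 + b) ^ 2 = 2 * b - θ + 3 := by linear_combination hb2
  have hN : (1 - (1 - θ)) ^ 2 + (1 + b) ^ 2 = 2 * b + θ + 2 := by linear_combination hb2
  rw [hD, hN, log_div (by positivity) (by linarith), log_div (by positivity) (by linarith),
    log_mul (by norm_num) pi_ne_zero, show (20 : ℝ) = 4 * 5 by norm_num,
    log_mul (by norm_num) (by norm_num)]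
  norm_num
  ring
end

section
/- Let K* ⊆ ℝ^d be the dual cone K* = {y ∈ ℝ^d : ∀ x ∈ K, ⟨x,y⟩ ≥ 0} of a set K ⊆ ℝ^d, assume K* has nonempty interior, and define χ(x) = ∫_{K*} exp(−⟨x,y⟩) dy ∈ [0,∞]. Then χ is strictly logarithmically convex on its finiteness domain: for all x1 ≠ x2 with χ(x1) < ∞ and χ(x2) < ∞, and all t ∈ (0,1), one has χ(t·x1 + (1−t)·x2) < χ(x1)^t · χ(x2)^{1−t}. -/
/-!
Write `e_x(y) = exp (-⟪x, y⟫)`, so that `e_{t x₁ + (1 - t) x₂} = e_{x₁} ^ t * e_{x₂} ^ (1 - t)`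
and the claim is Hölder's inequality for `e_{x₁}` and `e_{x₂}` on `K*`, made strict. After
normalising both functions to unit integral, the pointwise weighted AM–GM inequality
`p ^ t * q ^ (1 - t) ≤ t p + (1 - t) q` integrates to Hölder, and it is strict wherever `p ≠ q`.
Here the normalised exponentials agree only on an affine hyperplane `⟪x₂ - x₁, y⟫ = c`, which is
Lebesgue-null, while `K*` has positive measure because its interior is nonempty.
-/

open MeasureTheory Real
open scoped RealInnerProductSpace ENNReal

/-- The dual cone of a subset `K` of Euclidean space. -/
def dualConeSet {d : ℕ} (K : Set (EuclideanSpace ℝ (Fin d))) :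
    Set (EuclideanSpace ℝ (Fin d)) :=
  {y | ∀ x ∈ K, 0 ≤ ⟪x, y⟫}

/-- The characteristic function `χ(x) = ∫_{K*} exp(−⟨x,y⟩) dy` of a cone,
with values in `[0,∞]`. -/
noncomputable def c023char {d : ℕ} (K : Set (EuclideanSpace ℝ (Fin d)))
    (x : EuclideanSpace ℝ (Fin d)) : ℝ≥0∞ :=
  ∫⁻ y in dualConeSet K, ENNReal.ofReal (Real.exp (-⟪x, y⟫))

namespace ENNReal

variable {t : ℝ}

lemma rpow_mul_rpow_lt_add {a b : ℝ≥0∞} (ha : a ≠ ∞) (hb : b ≠ ∞) (hab : a ≠ b)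
    (ht0 : 0 < t) (ht1 : t < 1) :
    a ^ t * b ^ (1 - t) < ENNReal.ofReal t * a + ENNReal.ofReal (1 - t) * b := by
  have hab' : a.toReal ≠ b.toReal := fun h => hab ((toReal_eq_toReal_iff' ha hb).1 h)
  rw [← ofReal_toReal ha, ← ofReal_toReal hb, ofReal_rpow_of_nonneg toReal_nonneg ht0.le,
    ofReal_rpow_of_nonneg toReal_nonneg (by linarith), ← ofReal_mul (by positivity),
    ← ofReal_mul ht0.le, ← ofReal_mul (by linarith), ← ofReal_add (by positivity)
      (mul_nonneg (by linarith) toReal_nonneg)]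
  have hreal := (Real.geom_mean_lt_arith_mean2_weighted_iff_of_pos ht0 (by linarith : 0 < 1 - t)
    toReal_nonneg toReal_nonneg (by ring)).2 hab'
  exact (ofReal_lt_ofReal_iff (hreal.trans_le' (by positivity))).2 hreal

lemma rpow_mul_rpow_le_add {a b : ℝ≥0∞} (ha : a ≠ ∞) (hb : b ≠ ∞) (ht0 : 0 < t) (ht1 : t < 1) :
    a ^ t * b ^ (1 - t) ≤ ENNReal.ofReal t * a + ENNReal.ofReal (1 - t) * b := by
  rcases eq_or_ne a b with rfl | hab
  · rw [← rpow_add_of_nonneg _ _ ht0.le (by linarith), ← add_mul,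
      ← ofReal_add ht0.le (by linarith), add_sub_cancel, ofReal_one, one_mul, rpow_one]
  · exact (rpow_mul_rpow_lt_add ha hb hab ht0 ht1).le

variable {α : Type*} [MeasurableSpace α] {μ : Measure α} {f g : α → ℝ≥0∞}

lemma lintegral_div_lintegral_self (h0 : ∫⁻ a, f a ∂μ ≠ 0) (htop : ∫⁻ a, f a ∂μ ≠ ∞) :
    ∫⁻ a, f a / ∫⁻ a, f a ∂μ ∂μ = 1 := by
  simp_rw [div_eq_mul_inv]
  rw [lintegral_mul_const' _ _ (inv_ne_top.2 h0), ENNReal.mul_inv_cancel h0 htop]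

theorem lintegral_rpow_mul_rpow_lt_one (hf : AEMeasurable f μ) (hg : AEMeasurable g μ)
    (hf1 : ∫⁻ a, f a ∂μ = 1) (hg1 : ∫⁻ a, g a ∂μ = 1) (hfg : ¬ f =ᵐ[μ] g)
    (ht0 : 0 < t) (ht1 : t < 1) :
    ∫⁻ a, f a ^ t * g a ^ (1 - t) ∂μ < 1 := by
  have hf_fin := ae_lt_top' hf (by simp [hf1])
  have hg_fin := ae_lt_top' hg (by simp [hg1])
  have hmean : ∫⁻ a, ENNReal.ofReal t * f a + ENNReal.ofReal (1 - t) * g a ∂μ = 1 := by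
    rw [lintegral_add_left' (hf.const_mul _), lintegral_const_mul'' _ hf,
      lintegral_const_mul'' _ hg, hf1, hg1, mul_one, mul_one, ← ofReal_add ht0.le (by linarith),
      add_sub_cancel, ofReal_one]
  have hle : ∀ᵐ a ∂μ,
      f a ^ t * g a ^ (1 - t) ≤ ENNReal.ofReal t * f a + ENNReal.ofReal (1 - t) * g a := by
    filter_upwards [hf_fin, hg_fin] with a hfa hga
    exact rpow_mul_rpow_le_add hfa.ne hga.ne ht0 ht1
  rw [← hmean]
  refine lintegral_strict_mono_of_ae_le_of_ae_lt_on ((hf.const_mul _).add (hg.const_mul _))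
    ((lintegral_mono_ae hle).trans_lt (hmean ▸ one_lt_top)).ne hle (s := {a | f a ≠ g a}) ?_ ?_
  · rwa [Filter.EventuallyEq, ae_iff] at hfg
  · filter_upwards [hf_fin, hg_fin] with a hfa hga hne
    exact rpow_mul_rpow_lt_add hfa.ne hga.ne hne ht0 ht1

theorem lintegral_rpow_mul_rpow_lt (hf : AEMeasurable f μ) (hg : AEMeasurable g μ)
    (hf0 : ∫⁻ a, f a ∂μ ≠ 0) (hf_top : ∫⁻ a, f a ∂μ ≠ ∞)
    (hg0 : ∫⁻ a, g a ∂μ ≠ 0) (hg_top : ∫⁻ a, g a ∂μ ≠ ∞)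
    (hfg : ¬ (fun a => f a / ∫⁻ a, f a ∂μ) =ᵐ[μ] fun a => g a / ∫⁻ a, g a ∂μ)
    (ht0 : 0 < t) (ht1 : t < 1) :
    ∫⁻ a, f a ^ t * g a ^ (1 - t) ∂μ < (∫⁻ a, f a ∂μ) ^ t * (∫⁻ a, g a ∂μ) ^ (1 - t) := by
  set A := ∫⁻ a, f a ∂μ
  set B := ∫⁻ a, g a ∂μ
  have ht1' : 0 ≤ 1 - t := by linarith
  have hC0 : A ^ t * B ^ (1 - t) ≠ 0 :=
    mul_ne_zero (rpow_pos (pos_iff_ne_zero.2 hf0) hf_top).ne'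
      (rpow_pos (pos_iff_ne_zero.2 hg0) hg_top).ne'
  have hCtop : A ^ t * B ^ (1 - t) ≠ ∞ :=
    mul_ne_top (rpow_ne_top_of_nonneg ht0.le hf_top) (rpow_ne_top_of_nonneg ht1' hg_top)
  have hscale : ∀ a, f a ^ t * g a ^ (1 - t)
      = A ^ t * B ^ (1 - t) * ((f a / A) ^ t * (g a / B) ^ (1 - t)) := by
    intro a
    conv_lhs => rw [← ENNReal.mul_div_cancel hf0 hf_top (b := f a),
      ← ENNReal.mul_div_cancel hg0 hg_top (b := g a)]
    rw [mul_rpow_of_nonneg _ _ ht0.le, mul_rpow_of_nonneg _ _ ht1']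
    ring
  calc ∫⁻ a, f a ^ t * g a ^ (1 - t) ∂μ
      = A ^ t * B ^ (1 - t) * ∫⁻ a, (f a / A) ^ t * (g a / B) ^ (1 - t) ∂μ := by
        simp_rw [hscale]
        exact lintegral_const_mul' _ _ hCtop
    _ < A ^ t * B ^ (1 - t) * 1 :=
        ENNReal.mul_lt_mul_right hC0 hCtop <|
          lintegral_rpow_mul_rpow_lt_one (hf.div_const _) (hg.div_const _)
            (lintegral_div_lintegral_self hf0 hf_top) (lintegral_div_lintegral_self hg0 hg_top)
            hfg ht0 ht1
    _ = A ^ t * B ^ (1 - t) := mul_one _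

end ENNReal

theorem ofReal_exp_div {s : ℝ} {A : ℝ≥0∞} (h0 : A ≠ 0) (htop : A ≠ ∞) :
    ENNReal.ofReal (exp s) / A = ENNReal.ofReal (exp (s - log A.toReal)) := by
  rw [exp_sub, exp_log (ENNReal.toReal_pos h0 htop),
    ENNReal.ofReal_div_of_pos (ENNReal.toReal_pos h0 htop), ENNReal.ofReal_toReal htop]

section InnerProductSpace

variable {E : Type*} [NormedAddCommGroup E] [InnerProductSpace ℝ E]

theorem ofReal_exp_neg_inner_smul_add_smul (x₁ x₂ y : E) (t : ℝ) :
    ENNReal.ofReal (exp (-⟪t • x₁ + (1 - t) • x₂, y⟫)) =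
      ENNReal.ofReal (exp (-⟪x₁, y⟫)) ^ t * ENNReal.ofReal (exp (-⟪x₂, y⟫)) ^ (1 - t) := by
  rw [ENNReal.ofReal_rpow_of_pos (exp_pos _), ENNReal.ofReal_rpow_of_pos (exp_pos _),
    ← ENNReal.ofReal_mul (by positivity), ← exp_mul, ← exp_mul, ← exp_add, inner_add_left,
    real_inner_smul_left, real_inner_smul_left]
  ring_nf

variable [FiniteDimensional ℝ E] [MeasurableSpace E] [BorelSpace E]
  (μ : Measure E) [μ.IsAddHaarMeasure]

theorem addHaar_setOf_inner_eq {v : E} (hv : v ≠ 0) (c : ℝ) : μ {y | ⟪v, y⟫ = c} = 0 := by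
  have hvv : ⟪v, v⟫ ≠ 0 := inner_self_ne_zero.2 hv
  let s : AffineSubspace ℝ E := .mk' ((c / ⟪v, v⟫) • v) (LinearMap.ker (innerₛₗ ℝ v))
  have hs : {y | ⟪v, y⟫ = c} = s := by
    ext y
    simp only [s, Set.mem_ofPred_eq, SetLike.mem_coe, AffineSubspace.mem_mk', vsub_eq_sub,
      LinearMap.mem_ker, innerₛₗ_apply_apply, inner_sub_right, real_inner_smul_right,
      div_mul_cancel₀ _ hvv, sub_eq_zero]
  have hs_top : s ≠ ⊤ := fun h => by
    have hdir := congrArg AffineSubspace.direction h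
    rw [AffineSubspace.direction_mk', AffineSubspace.direction_top, LinearMap.ker_eq_top] at hdir
    exact hvv (LinearMap.congr_fun hdir v)
  rw [hs]
  exact Measure.addHaar_affineSubspace μ s hs_top

theorem not_ae_eq_ofReal_exp_neg_inner_div {S : Set E} (hS : μ S ≠ 0) {x₁ x₂ : E} (hx : x₁ ≠ x₂)
    {A B : ℝ≥0∞} (hA0 : A ≠ 0) (hA : A ≠ ∞) (hB0 : B ≠ 0) (hB : B ≠ ∞) :
    ¬ (fun y => ENNReal.ofReal (exp (-⟪x₁, y⟫)) / A) =ᵐ[μ.restrict S]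
      fun y => ENNReal.ofReal (exp (-⟪x₂, y⟫)) / B := by
  intro h
  set H := {y | ⟪x₂ - x₁, y⟫ = log A.toReal - log B.toReal}
  have hH : ∀ᵐ y ∂μ.restrict S, y ∈ H := by
    filter_upwards [h] with y hy
    rw [ofReal_exp_div hA0 hA, ofReal_exp_div hB0 hB,
      ENNReal.ofReal_eq_ofReal_iff (exp_pos _).le (exp_pos _).le, exp_eq_exp] at hy
    change ⟪x₂ - x₁, y⟫ = _
    rw [inner_sub_left]
    linarith
  have hH_null : ∀ᵐ y ∂μ.restrict S, y ∉ H := ae_restrict_of_ae <|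
    measure_eq_zero_iff_ae_notMem.1 (addHaar_setOf_inner_eq μ (sub_ne_zero.2 hx.symm) _)
  have hfalse : ∀ᵐ _ ∂μ.restrict S, False := (hH.and hH_null).mono fun _ h => h.2 h.1
  rw [Filter.eventually_false_iff_eq_bot, ae_eq_bot, Measure.restrict_eq_zero] at hfalse
  exact hS hfalse

end InnerProductSpace

theorem c023char_pos {d : ℕ} {K : Set (EuclideanSpace ℝ (Fin d))}
    (hK : volume (dualConeSet K) ≠ 0) (x : EuclideanSpace ℝ (Fin d)) : 0 < c023char K x := by
  have hsupp : Function.support (fun y : EuclideanSpace ℝ (Fin d) =>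
      ENNReal.ofReal (exp (-⟪x, y⟫))) = Set.univ :=
    Set.eq_univ_of_forall fun y => (ENNReal.ofReal_pos.2 (exp_pos _)).ne'
  rw [c023char, lintegral_pos_iff_support (by fun_prop), hsupp, Measure.restrict_apply_univ]
  exact pos_iff_ne_zero.2 hK

/-- The characteristic function is strictly logarithmically convex on its
finiteness domain, provided the dual cone has nonempty interior. -/
theorem char_strictly_logConvex {d : ℕ} (K : Set (EuclideanSpace ℝ (Fin d)))
    (hint : (interior (dualConeSet K)).Nonempty)
    (x1 x2 : EuclideanSpace ℝ (Fin d)) (hne : x1 ≠ x2)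
    (h1 : c023char K x1 < ⊤) (h2 : c023char K x2 < ⊤)
    (t : ℝ) (ht : t ∈ Set.Ioo (0 : ℝ) 1) :
    c023char K (t • x1 + (1 - t) • x2) <
      c023char K x1 ^ t * c023char K x2 ^ (1 - t) := by
  obtain ⟨ht0, ht1⟩ := ht
  have hK : volume (dualConeSet K) ≠ 0 := (Measure.measure_pos_of_nonempty_interior _ hint).ne'
  have hpos := c023char_pos hK
  simp_rw [c023char, ofReal_exp_neg_inner_smul_add_smul]
  exact ENNReal.lintegral_rpow_mul_rpow_lt (by fun_prop) (by fun_prop)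
    (hpos x1).ne' h1.ne (hpos x2).ne' h2.ne
    (not_ae_eq_ofReal_exp_neg_inner_div volume hK hne (hpos x1).ne' h1.ne (hpos x2).ne' h2.ne)
    ht0 ht1
end
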